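/- arXiv:1402.5165 — 2 statements merged into one kernel-verified Lean document; each statement's English description precedes it below -/
import Mathlib

section
/- Let S be a correlated-strategies solution of finite games. If S satisfies Strategic Equivalence (SE) and Pure Individual Rationality for All Recommendations (PIRAR), then for every game u, every element of S(u) is a correlated equilibrium of u, i.e. S(u) ⊆ CE(u). -/
open scoped Classical

noncomputable section

/-- A finite normal-form game on action sets `A i`: a payoff function for each player. -/
abbrev Game {n : ℕ} (A : Fin n → Type*) : Type _ :=
  Fin n → (∀ j, A j) → ℝ

/-- Opponents' action profiles of player `i`. -/
abbrev Opp {n : ℕ} (A : Fin n → Type*) (i : Fin n) : Type _ :=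
  ∀ j : {j : Fin n // j ≠ i}, A j.1

/-- The game `z(c, i, b₋ᵢ)`: player `i` receives payoff `c` at every profile whose
opponents' component equals `b`, and `0` otherwise; all other players always get `0`. -/
def zGame {n : ℕ} {A : Fin n → Type*} (c : ℝ) (i : Fin n) (b : Opp A i) : Game A :=
  fun j a => if j = i ∧ (∀ k : {k : Fin n // k ≠ i}, a k.1 = b k) then c else 0

/-- The full action profile obtained from own action `ai` of player `i` and an
opponents' profile `b`. -/
def merge {n : ℕ} {A : Fin n → Type*} (i : Fin n) (ai : A i) (b : Opp A i) : ∀ j, A j :=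
  fun j => if h : j = i then cast (congrArg A h.symm) ai else b ⟨j, h⟩

/-- The pure individually rational value of player `i`:
`pir_i(u) = max_{a_i} min_{a_{-i}} u_i(a_i, a_{-i})`. -/
def pir {n : ℕ} {A : Fin n → Type*} (u : Game A) (i : Fin n) : ℝ :=
  ⨆ ai : A i, ⨅ b : Opp A i, u i (merge i ai b)

/-- `a` is a pure Nash equilibrium of `u`. -/
def IsPNE {n : ℕ} {A : Fin n → Type*} (u : Game A) (a : ∀ j, A j) : Prop :=
  ∀ (i : Fin n) (bi : A i), u i (Function.update a i bi) ≤ u i a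

/-- A correlated strategy: a probability distribution on the set `A` of action profiles. -/
abbrev CorrDist {n : ℕ} (A : Fin n → Type*) [∀ i, Fintype (A i)] : Type _ :=
  {x : (∀ j, A j) → ℝ // (∀ a, 0 ≤ x a) ∧ ∑ a, x a = 1}

/-!
Fix a player `i` and a deviation `bi`. Adding to `u` the games `z(-u_i(bi, b), i, b)` for all
opponents' profiles `b` does not change `S(u)` by SE, and turns player `i`'s payoff into the
deviation gain `u_i(a) - u_i(bi, a_{-i})`. In the new game the pure action `bi` guarantees
payoff `0`, so `pir_i ≥ 0`, and PIRAR says that the conditional expected gain of obeying a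
recommendation `ai` rather than deviating to `bi` is nonnegative: this is the CE inequality.
-/

section DeviationGain

variable {n : ℕ} {A : Fin n → Type*}

def oppProfile (i : Fin n) (a : ∀ j, A j) : Opp A i :=
  fun k => a k.1

@[simp]
lemma merge_self (i : Fin n) (ai : A i) (b : Opp A i) : merge i ai b i = ai := by
  simp [merge]

lemma merge_oppProfile (i : Fin n) (bi : A i) (a : ∀ j, A j) :
    merge i bi (oppProfile i a) = Function.update a i bi := by
  funext j
  by_cases h : j = i
  · subst h
    simp
  · simp [merge, oppProfile, h]

lemma update_merge_self (i : Fin n) (ai : A i) (b : Opp A i) :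
    Function.update (merge i ai b) i ai = merge i ai b :=
  Function.update_eq_self_iff.mpr (merge_self i ai b).symm

lemma zGame_apply_self (c : ℝ) (i : Fin n) (b : Opp A i) (a : ∀ j, A j) :
    zGame c i b i a = if oppProfile i a = b then c else 0 := by
  simp only [zGame, true_and, funext_iff, oppProfile]

lemma sum_zGame_apply_self [∀ i, Fintype (A i)] (i : Fin n) (f : Opp A i → ℝ)
    (a : ∀ j, A j) : (∑ b, zGame (f b) i b) i a = f (oppProfile i a) := by
  simp only [Finset.sum_apply, zGame_apply_self, Finset.sum_ite_eq, Finset.mem_univ, if_true]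

lemma pir_nonneg_of_forall_merge_nonneg (u : Game A) (i : Fin n) [Finite (A i)] (ai : A i)
    (h : ∀ b, 0 ≤ u i (merge i ai b)) : 0 ≤ pir u i :=
  (Real.iInf_nonneg h).trans <|
    le_ciSup (f := fun ai' => ⨅ b, u i (merge i ai' b)) (Set.finite_range _).bddAbove ai

lemma eq_add_sum_zGame_of_strategicEquivalence [∀ i, Fintype (A i)] {α : Type*}
    (S : Game A → Set α)
    (SE : ∀ (u : Game A) (c : ℝ) (i : Fin n) (b : Opp A i), S u = S (u + zGame c i b))
    (u : Game A) (i : Fin n) (f : Opp A i → ℝ) (s : Finset (Opp A i)) :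
    S u = S (u + ∑ b ∈ s, zGame (f b) i b) := by
  induction s using Finset.induction with
  | empty => simp
  | insert b s hb ih =>
    rw [Finset.sum_insert hb, add_comm (zGame (f b) i b), ← add_assoc, ih]
    exact SE _ (f b) i b

def deviationGainGame [∀ i, Fintype (A i)] (u : Game A) (i : Fin n) (bi : A i) : Game A :=
  u + ∑ b, zGame (-u i (merge i bi b)) i b

lemma deviationGainGame_apply_self [∀ i, Fintype (A i)] (u : Game A) (i : Fin n) (bi : A i)
    (a : ∀ j, A j) :
    deviationGainGame u i bi i a = u i a - u i (Function.update a i bi) := by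
  rw [deviationGainGame, Pi.add_apply, Pi.add_apply, sum_zGame_apply_self, merge_oppProfile,
    ← sub_eq_add_neg]

lemma pir_deviationGainGame_nonneg [∀ i, Fintype (A i)] (u : Game A) (i : Fin n) (bi : A i) :
    0 ≤ pir (deviationGainGame u i bi) i :=
  pir_nonneg_of_forall_merge_nonneg _ i bi fun b => by
    rw [deviationGainGame_apply_self, update_merge_self, sub_self]

lemma sum_ite_mul_eq_zero_of_sum_ite_eq_zero {α β : Type*} [Fintype α] [DecidableEq β]
    {x : α → ℝ} (hx : ∀ a, 0 ≤ x a) (p : α → β) (c : β) (g : α → ℝ)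
    (h : ∑ a, (if p a = c then x a else 0) = 0) :
    ∑ a, (if p a = c then x a * g a else 0) = 0 := by
  rw [Finset.sum_eq_zero_iff_of_nonneg fun a _ => ite_nonneg (hx a) le_rfl] at h
  refine Finset.sum_eq_zero fun a ha => ?_
  have := h a ha
  split_ifs at this ⊢ <;> simp [this]

end DeviationGain

theorem statement3_general {n : ℕ} (A : Fin n → Type*)
    [∀ i, Fintype (A i)]
    (S : Game A → Set (CorrDist A))
    (SE : ∀ (u : Game A) (c : ℝ) (i : Fin n) (b : Opp A i), S u = S (u + zGame c i b))
    (PIRAR : ∀ u : Game A, ∀ x ∈ S u, ∀ (i : Fin n) (ai : A i),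
      0 < ∑ a, (if a i = ai then x.1 a else 0) →
      ∑ a, (if a i = ai then x.1 a * u i a else 0) ≥
        pir u i * ∑ a, (if a i = ai then x.1 a else 0)) :
    ∀ u : Game A, ∀ x ∈ S u, ∀ (i : Fin n) (ai bi : A i),
      ∑ a, (if a i = ai then x.1 a * u i a else 0) ≥
        ∑ a, (if a i = ai then x.1 a * u i (Function.update a i bi) else 0) := by
  intro u x hx i ai bi
  set v := deviationGainGame u i bi with hv
  have hxv : x ∈ S v :=
    eq_add_sum_zGame_of_strategicEquivalence S SE u i _ Finset.univ ▸ hx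
  have hgain : ∑ a, (if a i = ai then x.1 a * v i a else 0) =
      ∑ a, (if a i = ai then x.1 a * u i a else 0) -
        ∑ a, (if a i = ai then x.1 a * u i (Function.update a i bi) else 0) := by
    rw [← Finset.sum_sub_distrib]
    refine Finset.sum_congr rfl fun a _ => ?_
    split_ifs
    · rw [hv, deviationGainGame_apply_self, mul_sub]
    · rw [sub_zero]
  have hmarginal : 0 ≤ ∑ a, (if a i = ai then x.1 a else 0) :=
    Finset.sum_nonneg fun a _ => ite_nonneg (x.2.1 a) le_rfl
  suffices 0 ≤ ∑ a, (if a i = ai then x.1 a * v i a else 0) by linarith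
  rcases hmarginal.lt_or_eq with hpos | hzero
  · exact (mul_nonneg (pir_deviationGainGame_nonneg u i bi) hpos.le).trans
      (PIRAR v x hxv i ai hpos)
  · exact (sum_ite_mul_eq_zero_of_sum_ite_eq_zero x.2.1 (· i) ai _ hzero.symm).ge

/-- Any correlated-strategies solution satisfying Strategic Equivalence (SE) and
Pure Individual Rationality for All Recommendations (PIRAR) only outputs
correlated equilibria. -/
theorem statement3 {n : ℕ} (hn : 0 < n) (A : Fin n → Type*)
    [∀ i, Fintype (A i)] [∀ i, Nonempty (A i)]
    (S : Game A → Set (CorrDist A))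
    (SE : ∀ (u : Game A) (c : ℝ) (i : Fin n) (b : Opp A i), S u = S (u + zGame c i b))
    (PIRAR : ∀ u : Game A, ∀ x ∈ S u, ∀ (i : Fin n) (ai : A i),
      0 < ∑ a, (if a i = ai then x.1 a else 0) →
      ∑ a, (if a i = ai then x.1 a * u i a else 0) ≥
        pir u i * ∑ a, (if a i = ai then x.1 a else 0)) :
    ∀ u : Game A, ∀ x ∈ S u, ∀ (i : Fin n) (ai bi : A i),
      ∑ a, (if a i = ai then x.1 a * u i a else 0) ≥
        ∑ a, (if a i = ai then x.1 a * u i (Function.update a i bi) else 0) :=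
  statement3_general A S SE PIRAR
end
end

section
/- Let u be a continuous convex game on compact convex action sets and let ā be a strict pure Nash equilibrium of u. Then there exist continuous functions f_i : A_{-i} → ℝ for each player i such that in the game v' = u + Σ_{i∈[n]} z(i, f_i), the profile ā is a strict simultaneous maximizer: v'_i(ā) = 0 and v'_i(a) < v'_i(ā) for every player i and every profile a ∈ A with a ≠ ā. Consequently, there is no pure-strategies solution S of continuous convex games satisfying both Continuous Strategic Equivalence (CSE) and the Unique Simultaneous Maximizer axiom (USM), provided some continuous convex game on A has two distinct strict pure Nash equilibria. -/
open scoped Classical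

noncomputable section

variable {n : ℕ} {E : Fin n → Type*}
  [∀ i, NormedAddCommGroup (E i)] [∀ i, NormedSpace ℝ (E i)]

/-- Action profiles: one action from each player's action set `A i`. -/
abbrev CProfile (A : ∀ i, Set (E i)) : Type _ := ∀ j, ↥(A j)

/-- A game with action sets `A i`: a payoff function for each player. -/
abbrev CGame (A : ∀ i, Set (E i)) : Type _ := Fin n → CProfile A → ℝ

/-- Opponents' action profiles of player `i`. -/
abbrev COpp (A : ∀ i, Set (E i)) (i : Fin n) : Type _ :=
  ∀ j : {j : Fin n // j ≠ i}, ↥(A j.1)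

/-- The game `z(i, f)`: player `i` receives payoff `f(a₋ᵢ)` at every profile `a`
(irrespective of his own action); every other player always gets `0`. -/
def zC (A : ∀ i, Set (E i)) (i : Fin n) (f : COpp A i → ℝ) : CGame A :=
  fun j a => if j = i then f (fun k => a k.1) else 0

/-- The full profile obtained from own action `ai` of player `i` and an opponents'
profile `b`. -/
def mergeC (A : ∀ i, Set (E i)) (i : Fin n) (ai : ↥(A i)) (b : COpp A i) :
    CProfile A :=
  fun j => if h : j = i then cast (congrArg (fun t => ↥(A t)) h.symm) ai else b ⟨j, h⟩

/-- The pure individually rational value of player `i`: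
`pir_i(u) = max_{a_i} min_{a_{-i}} u_i(a_i, a_{-i})`. -/
def pirC (A : ∀ i, Set (E i)) (u : CGame A) (i : Fin n) : ℝ :=
  ⨆ ai : ↥(A i), ⨅ b : COpp A i, u i (mergeC A i ai b)

/-- A continuous convex game: each payoff function is continuous, and each player's
payoff is a convex function of his own action (for every fixed opponents' profile). -/
def IsCCGame (A : ∀ i, Set (E i)) (hconv : ∀ i, Convex ℝ (A i)) (u : CGame A) : Prop :=
  (∀ i, Continuous (u i)) ∧
  ∀ (i : Fin n) (a : CProfile A) (x y : ↥(A i)) (s t : ℝ)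
    (hs : 0 ≤ s) (ht : 0 ≤ t) (hst : s + t = 1),
    u i (Function.update a i ⟨s • (x : E i) + t • (y : E i),
        hconv i x.2 y.2 hs ht hst⟩) ≤
      s * u i (Function.update a i x) + t * u i (Function.update a i y)

/-- `a` is a pure Nash equilibrium of `u`. -/
def IsPNEc (A : ∀ i, Set (E i)) (u : CGame A) (a : CProfile A) : Prop :=
  ∀ (i : Fin n) (bi : ↥(A i)), u i (Function.update a i bi) ≤ u i a

/-- `a` is a strict pure Nash equilibrium of `u`. -/
def IsStrictPNEc (A : ∀ i, Set (E i)) (u : CGame A) (a : CProfile A) : Prop :=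
  ∀ (i : Fin n) (bi : ↥(A i)), bi ≠ a i → u i (Function.update a i bi) < u i a

section

variable {n : ℕ} {E : Fin n → Type*} {A : ∀ i, Set (E i)}

@[simp]
lemma mergeC_self (i : Fin n) (x : A i) (b : COpp A i) : mergeC A i x b i = x := by
  simp [mergeC]

lemma mergeC_of_ne {i j : Fin n} (h : j ≠ i) (x : A i) (b : COpp A i) :
    mergeC A i x b j = b ⟨j, h⟩ :=
  dif_neg h

lemma update_eq_mergeC (a : CProfile A) (i : Fin n) (x : A i) :
    Function.update a i x = mergeC A i x (fun k => a k.1) := by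
  funext j
  by_cases h : j = i
  · subst h
    simp
  · rw [Function.update_of_ne h, mergeC_of_ne h]

lemma mergeC_apply_restrict (a : CProfile A) (i : Fin n) :
    mergeC A i (a i) (fun k => a k.1) = a := by
  rw [← update_eq_mergeC, Function.update_eq_self]

lemma zC_update_self (i j : Fin n) (f : COpp A i → ℝ) (a : CProfile A) (x : A j) :
    zC A i f j (Function.update a j x) = zC A i f j a := by
  unfold zC
  split_ifs with h
  · subst h
    congr 1
    funext k
    exact Function.update_of_ne k.2 x a
  · rfl

lemma add_sum_zC_apply (u : CGame A) (f : ∀ i, COpp A i → ℝ) (i : Fin n) (a : CProfile A) :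
    (u + ∑ j, zC A j (f j)) i a = u i a + f i (fun k => a k.1) := by
  simp [zC, Finset.sum_apply]

lemma IsStrictPNEc.isPNEc {u : CGame A} {a : CProfile A} (ha : IsStrictPNEc A u a) :
    IsPNEc A u a := by
  intro i x
  rcases eq_or_ne x (a i) with rfl | hx
  · rw [Function.update_eq_self]
  · exact (ha i x hx).le

lemma IsStrictPNEc.apply_lt_of_ne_of_eq_off {u : CGame A} {abar a : CProfile A}
    (ha : IsStrictPNEc A u abar) (hne : a ≠ abar) {i : Fin n}
    (hres : ∀ j, j ≠ i → a j = abar j) : u i a < u i abar := by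
  have hdev : a = Function.update abar i (a i) := by
    funext j
    rcases eq_or_ne j i with rfl | hj
    · rw [Function.update_self]
    · rw [Function.update_of_ne hj, hres j hj]
  have hai : a i ≠ abar i := fun h => hne (by rw [hdev, h, Function.update_eq_self])
  simpa only [← hdev] using ha i (a i) hai

def IsStrictSimultaneousMaximizer (u : CGame A) (a : CProfile A) : Prop :=
  ∀ (i : Fin n) (b : CProfile A), b ≠ a → u i b < u i a

def bestReplyValue (u : CGame A) (i : Fin n) (b : COpp A i) : ℝ :=
  ⨆ x : A i, u i (mergeC A i x b)

end

section Topology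

variable {n : ℕ} {E : Fin n → Type*} [∀ i, TopologicalSpace (E i)] {A : ∀ i, Set (E i)}

lemma continuous_mergeC (i : Fin n) :
    Continuous fun p : A i × COpp A i => mergeC A i p.1 p.2 := by
  refine continuous_pi fun j => ?_
  by_cases h : j = i
  · subst h
    simpa only [mergeC_self] using continuous_fst
  · simp only [mergeC_of_ne h]
    fun_prop

variable {u : CGame A} {i : Fin n}

lemma continuous_bestReplyValue (hA : IsCompact (A i)) (hu : Continuous (u i)) :
    Continuous (bestReplyValue u i) := by
  have := isCompact_iff_compactSpace.mp hA
  have hcont : Continuous fun p : COpp A i × A i => u i (mergeC A i p.2 p.1) :=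
    hu.comp ((continuous_mergeC i).comp continuous_swap)
  have := isCompact_univ.continuous_sSup (f := fun b x => u i (mergeC A i x b)) hcont
  simp only [Set.image_univ] at this
  exact this

lemma le_bestReplyValue (hA : IsCompact (A i)) (hu : Continuous (u i)) (x : A i)
    (b : COpp A i) : u i (mergeC A i x b) ≤ bestReplyValue u i b := by
  have := isCompact_iff_compactSpace.mp hA
  exact le_ciSup (isCompact_range (hu.comp ((continuous_mergeC i).comp
    (continuous_id.prodMk continuous_const)))).bddAbove x

lemma apply_le_bestReplyValue (hA : IsCompact (A i)) (hu : Continuous (u i)) (a : CProfile A) :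
    u i a ≤ bestReplyValue u i (fun k => a k.1) := by
  simpa only [mergeC_apply_restrict] using le_bestReplyValue hA hu (a i) (fun k => a k.1)

lemma IsPNEc.bestReplyValue_eq {abar : CProfile A} (ha : IsPNEc A u abar)
    (hA : IsCompact (A i)) (hu : Continuous (u i)) :
    bestReplyValue u i (fun k => abar k.1) = u i abar := by
  have : Nonempty (A i) := ⟨abar i⟩
  refine le_antisymm (ciSup_le fun x => ?_) (apply_le_bestReplyValue hA hu abar)
  simpa only [update_eq_mergeC] using ha i x

end Topology

/-- Each player `i` is charged his best-reply value against `a₋ᵢ`, which makes `ā` a weak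
maximizer with value `0`, and further the distance from `a₋ᵢ` to `ā₋ᵢ`; strictness of the
equilibrium handles the profiles with `a₋ᵢ = ā₋ᵢ`. -/
theorem IsStrictPNEc.exists_add_sum_zC_isStrictSimultaneousMaximizer {n : ℕ}
    {E : Fin n → Type*} [∀ i, MetricSpace (E i)] {A : ∀ i, Set (E i)}
    (hA : ∀ i, IsCompact (A i)) {u : CGame A} (hu : ∀ i, Continuous (u i))
    {abar : CProfile A} (ha : IsStrictPNEc A u abar) :
    ∃ f : ∀ i, COpp A i → ℝ, (∀ i, Continuous (f i)) ∧
      (∀ i, (u + ∑ j, zC A j (f j)) i abar = 0) ∧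
      IsStrictSimultaneousMaximizer (u + ∑ j, zC A j (f j)) abar := by
  refine ⟨fun i b => -bestReplyValue u i b - dist b (fun k => abar k.1),
    fun i => ((continuous_bestReplyValue (hA i) (hu i)).neg.sub
      (continuous_id.dist continuous_const)), fun i => ?_, fun i a hne => ?_⟩
  · rw [add_sum_zC_apply, ha.isPNEc.bestReplyValue_eq (hA i) (hu i), dist_self]
    ring
  · rw [add_sum_zC_apply, add_sum_zC_apply, ha.isPNEc.bestReplyValue_eq (hA i) (hu i),
      dist_self]
    rcases eq_or_ne (fun k : {j : Fin n // j ≠ i} => a k.1) (fun k => abar k.1)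
      with hres | hres
    · rw [hres, ha.isPNEc.bestReplyValue_eq (hA i) (hu i), dist_self]
      linarith [ha.apply_lt_of_ne_of_eq_off hne fun j hj => congrFun hres ⟨j, hj⟩]
    · linarith [apply_le_bestReplyValue (hA i) (hu i) a, dist_pos.mpr hres]

section Convex

variable {n : ℕ} {E : Fin n → Type*}
  [∀ i, NormedAddCommGroup (E i)] [∀ i, NormedSpace ℝ (E i)]
  {A : ∀ i, Set (E i)} (hconv : ∀ i, Convex ℝ (A i))

def SatisfiesCSE (S : CGame A → Set (CProfile A)) : Prop :=
  ∀ v : CGame A, IsCCGame A hconv v →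
    ∀ (i : Fin n) (g : COpp A i → ℝ), Continuous g → S v = S (v + zC A i g)

def SatisfiesUSM (S : CGame A → Set (CProfile A)) : Prop :=
  ∀ v : CGame A, IsCCGame A hconv v →
    ∀ a : CProfile A, IsStrictSimultaneousMaximizer v a → S v = {a}

variable {hconv}

lemma IsCCGame.add_zC {v : CGame A} (hv : IsCCGame A hconv v) (i : Fin n)
    {g : COpp A i → ℝ} (hg : Continuous g) : IsCCGame A hconv (v + zC A i g) := by
  refine ⟨fun j => (hv.1 j).add ?_, fun j a x y s t hs ht hst => ?_⟩
  · unfold zC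
    split_ifs
    · exact hg.comp (continuous_pi fun k => continuous_apply k.1)
    · exact continuous_const
  · simp only [Pi.add_apply, zC_update_self]
    linear_combination hv.2 j a x y s t hs ht hst - zC A i g j a * hst

lemma IsCCGame.add_sum_zC {v : CGame A} (hv : IsCCGame A hconv v) {f : ∀ i, COpp A i → ℝ}
    (hf : ∀ i, Continuous (f i)) (s : Finset (Fin n)) :
    IsCCGame A hconv (v + ∑ i ∈ s, zC A i (f i)) := by
  induction s using Finset.induction_on with
  | empty => simpa using hv
  | insert i s hi ih =>
    rw [Finset.sum_insert hi, add_comm (zC A i (f i)), ← add_assoc]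
    exact ih.add_zC i (hf i)

variable {S : CGame A → Set (CProfile A)}

lemma SatisfiesCSE.apply_add_sum_zC (hS : SatisfiesCSE hconv S) {v : CGame A}
    (hv : IsCCGame A hconv v) {f : ∀ i, COpp A i → ℝ} (hf : ∀ i, Continuous (f i))
    (s : Finset (Fin n)) : S (v + ∑ i ∈ s, zC A i (f i)) = S v := by
  induction s using Finset.induction_on with
  | empty => simp
  | insert i s hi ih =>
    rw [Finset.sum_insert hi, add_comm (zC A i (f i)), ← add_assoc,
      ← hS _ (hv.add_sum_zC hf s) i (f i) (hf i), ih]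

lemma SatisfiesCSE.eq_singleton_of_isStrictPNEc (hCSE : SatisfiesCSE hconv S)
    (hUSM : SatisfiesUSM hconv S) (hA : ∀ i, IsCompact (A i)) {w : CGame A}
    (hw : IsCCGame A hconv w) {c : CProfile A} (hc : IsStrictPNEc A w c) : S w = {c} := by
  obtain ⟨f, hf, -, hmax⟩ := hc.exists_add_sum_zC_isStrictSimultaneousMaximizer hA hw.1
  rw [← hCSE.apply_add_sum_zC hw hf Finset.univ]
  exact hUSM _ (hw.add_sum_zC hf Finset.univ) c hmax

end Convex

theorem statement19_general {n : ℕ} {E : Fin n → Type*}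
    [∀ i, NormedAddCommGroup (E i)] [∀ i, NormedSpace ℝ (E i)]
    (A : ∀ i, Set (E i)) (hA : ∀ i, IsCompact (A i)) (hconv : ∀ i, Convex ℝ (A i))
    (u : CGame A) (hu : IsCCGame A hconv u)
    (abar : CProfile A) (ha : IsStrictPNEc A u abar) :
    (∃ f : ∀ i : Fin n, COpp A i → ℝ,
      (∀ i, Continuous (f i)) ∧
      (∀ i : Fin n, (u + ∑ i' : Fin n, zC A i' (f i')) i abar = 0) ∧
      (∀ (i : Fin n) (a : CProfile A), a ≠ abar →
        (u + ∑ i' : Fin n, zC A i' (f i')) i a <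
          (u + ∑ i' : Fin n, zC A i' (f i')) i abar)) ∧
    ((∃ w : CGame A, IsCCGame A hconv w ∧
        ∃ a a' : CProfile A, a ≠ a' ∧ IsStrictPNEc A w a ∧ IsStrictPNEc A w a') →
      ¬ ∃ S : CGame A → Set (CProfile A),
        (∀ v : CGame A, IsCCGame A hconv v →
          ∀ (i : Fin n) (g : COpp A i → ℝ), Continuous g → S v = S (v + zC A i g)) ∧
        (∀ (v : CGame A), IsCCGame A hconv v → ∀ a : CProfile A,
          (∀ (i : Fin n) (b : CProfile A), b ≠ a → v i a > v i b) → S v = {a})) := by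
  refine ⟨ha.exists_add_sum_zC_isStrictSimultaneousMaximizer hA hu.1, ?_⟩
  rintro ⟨w, hw, a, a', hne, hwa, hwa'⟩
    ⟨S, (hCSE : SatisfiesCSE hconv S), (hUSM : SatisfiesUSM hconv S)⟩
  have hSa := hCSE.eq_singleton_of_isStrictPNEc hUSM hA hw hwa
  have hSa' := hCSE.eq_singleton_of_isStrictPNEc hUSM hA hw hwa'
  exact hne (Set.singleton_eq_singleton_iff.mp (hSa.symm.trans hSa'))

/-- For a continuous convex game `u` with a strict pure Nash equilibrium `ā`, there
are continuous functions `fᵢ` such that in `v' = u + ∑ᵢ z(i, fᵢ)` the profile `ā`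
is a strict simultaneous maximizer (with value `0` for every player).
Consequently, if some continuous convex game on `A` has two distinct strict pure
Nash equilibria, then no pure-strategies solution of continuous convex games
satisfies both Continuous Strategic Equivalence (CSE) and the Unique Simultaneous
Maximizer axiom (USM). -/
theorem statement19 {n : ℕ} (hn : 0 < n) {E : Fin n → Type*}
    [∀ i, NormedAddCommGroup (E i)] [∀ i, NormedSpace ℝ (E i)]
    (A : ∀ i, Set (E i)) (hA : ∀ i, IsCompact (A i)) (hconv : ∀ i, Convex ℝ (A i))
    (hne : ∀ i, (A i).Nonempty)
    (u : CGame A) (hu : IsCCGame A hconv u)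
    (abar : CProfile A) (ha : IsStrictPNEc A u abar) :
    (∃ f : ∀ i : Fin n, COpp A i → ℝ,
      (∀ i, Continuous (f i)) ∧
      (∀ i : Fin n, (u + ∑ i' : Fin n, zC A i' (f i')) i abar = 0) ∧
      (∀ (i : Fin n) (a : CProfile A), a ≠ abar →
        (u + ∑ i' : Fin n, zC A i' (f i')) i a <
          (u + ∑ i' : Fin n, zC A i' (f i')) i abar)) ∧
    ((∃ w : CGame A, IsCCGame A hconv w ∧
        ∃ a a' : CProfile A, a ≠ a' ∧ IsStrictPNEc A w a ∧ IsStrictPNEc A w a') →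
      ¬ ∃ S : CGame A → Set (CProfile A),
        (∀ v : CGame A, IsCCGame A hconv v →
          ∀ (i : Fin n) (g : COpp A i → ℝ), Continuous g → S v = S (v + zC A i g)) ∧
        (∀ (v : CGame A), IsCCGame A hconv v → ∀ a : CProfile A,
          (∀ (i : Fin n) (b : CProfile A), b ≠ a → v i a > v i b) → S v = {a})) :=
  statement19_general A hA hconv u hu abar ha
end
end
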